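/- arXiv:1603.03606 — 14 statements merged into one kernel-verified Lean document; each statement's English description precedes it below -/
import Mathlib

section
/- If (f_μ, φ) : X → Y and (g_ν, ψ) : Y → Z are morphisms of inverse systems in a category C and (g_ν, ψ) is movable, then the composition (h_ν, χ) = (g_ν, ψ) ∘ (f_μ, φ) (where χ = φ ∘ ψ and h_ν = g_ν ∘ f_{ψ(ν)}) is also movable. -/
open CategoryTheory

universe u v

/-- An inverse system in a category `C` over a preordered index set `Λ`:
objects `obj a` and bonding morphisms `p : obj b ⟶ obj a` for `a ≤ b`. -/
structure InvSys (C : Type u) [Category.{v} C] (Λ : Type*) [Preorder Λ] where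
  obj : Λ → C
  p : ∀ {a b : Λ}, a ≤ b → (obj b ⟶ obj a)
  p_id : ∀ a : Λ, p (le_refl a) = 𝟙 (obj a)
  p_comp : ∀ {a b c : Λ} (h1 : a ≤ b) (h2 : b ≤ c), p h2 ≫ p h1 = p (h1.trans h2)

variable {C : Type u} [Category.{v} C]

/-- A movable inverse system. -/
def InvSys.Movable {Λ : Type*} [Preorder Λ] (X : InvSys C Λ) : Prop :=
  ∀ a : Λ, ∃ a', ∃ h' : a ≤ a', ∀ a'', ∀ h'' : a ≤ a'',
    ∃ r : X.obj a' ⟶ X.obj a'', r ≫ X.p h'' = X.p h'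

/-- A strongly movable inverse system. -/
def InvSys.StronglyMovable {Λ : Type*} [Preorder Λ] (X : InvSys C Λ) : Prop :=
  ∀ a : Λ, ∃ a', ∃ h' : a ≤ a', ∀ a'', ∀ h'' : a ≤ a'',
    ∃ astar, ∃ h1 : a' ≤ astar, ∃ h2 : a'' ≤ astar,
      ∃ r : X.obj a' ⟶ X.obj a'',
        r ≫ X.p h'' = X.p h' ∧ X.p h1 ≫ r = X.p h2

/-- A uniformly movable inverse system. -/
def InvSys.UniformlyMovable {Λ : Type*} [Preorder Λ] (X : InvSys C Λ) : Prop :=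
  ∀ a : Λ, ∃ a', ∃ h' : a ≤ a',
    ∃ r : ∀ b : Λ, X.obj a' ⟶ X.obj b,
      (∀ {b b' : Λ} (hb : b ≤ b'), r b' ≫ X.p hb = r b) ∧ r a = X.p h'

/-- Movability of the data `(φ, f)` of a morphism of inverse systems `X → Y`. -/
def MovableData {Λ M : Type*} [Preorder Λ] [Preorder M]
    (X : InvSys C Λ) (Y : InvSys C M) (φ : M → Λ)
    (f : ∀ m : M, X.obj (φ m) ⟶ Y.obj m) : Prop :=
  ∀ m : M, ∃ lam, ∃ h : φ m ≤ lam, ∀ m', ∀ hm : m ≤ m',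
    ∃ u : X.obj lam ⟶ Y.obj m', X.p h ≫ f m = u ≫ Y.p hm

/-- Strong movability of the data of a morphism of inverse systems. -/
def StronglyMovableData {Λ M : Type*} [Preorder Λ] [Preorder M]
    (X : InvSys C Λ) (Y : InvSys C M) (φ : M → Λ)
    (f : ∀ m : M, X.obj (φ m) ⟶ Y.obj m) : Prop :=
  ∀ m : M, ∃ lam, ∃ h : φ m ≤ lam, ∀ m', ∀ hm : m ≤ m',
    ∃ lstar, ∃ h1 : lam ≤ lstar, ∃ h2 : φ m' ≤ lstar,
      ∃ u : X.obj lam ⟶ Y.obj m',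
        u ≫ Y.p hm = X.p h ≫ f m ∧ X.p h1 ≫ u = X.p h2 ≫ f m'

/-- Uniform movability of the data of a morphism of inverse systems. -/
def UniformlyMovableData {Λ M : Type*} [Preorder Λ] [Preorder M]
    (X : InvSys C Λ) (Y : InvSys C M) (φ : M → Λ)
    (f : ∀ m : M, X.obj (φ m) ⟶ Y.obj m) : Prop :=
  ∀ m : M, ∃ lam, ∃ h : φ m ≤ lam,
    ∃ u : ∀ m1 : M, X.obj lam ⟶ Y.obj m1,
      (∀ {m1 m2 : M} (hm : m1 ≤ m2), u m2 ≫ Y.p hm = u m1) ∧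
        u m = X.p h ≫ f m

/-- Co-movability of the data of a morphism of inverse systems. -/
def CoMovableData {Λ M : Type*} [Preorder Λ] [Preorder M]
    (X : InvSys C Λ) (Y : InvSys C M) (φ : M → Λ)
    (f : ∀ m : M, X.obj (φ m) ⟶ Y.obj m) : Prop :=
  ∀ m : M, ∃ lam, ∃ h : φ m ≤ lam, ∀ lam', ∀ h' : φ m ≤ lam',
    ∃ r : X.obj lam ⟶ X.obj lam', X.p h ≫ f m = r ≫ X.p h' ≫ f m

/-- Strong co-movability of the data of a morphism of inverse systems. -/
def StronglyCoMovableData {Λ M : Type*} [Preorder Λ] [Preorder M]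
    (X : InvSys C Λ) (Y : InvSys C M) (φ : M → Λ)
    (f : ∀ m : M, X.obj (φ m) ⟶ Y.obj m) : Prop :=
  ∀ m : M, ∃ lam, ∃ h : φ m ≤ lam, ∀ lam', ∀ h' : φ m ≤ lam',
    ∃ r : X.obj lam ⟶ X.obj lam',
      (X.p h ≫ f m = r ≫ X.p h' ≫ f m) ∧
        ∃ lstar, ∃ h1 : lam ≤ lstar, ∃ h2 : lam' ≤ lstar, X.p h1 ≫ r = X.p h2

/-- Uniform co-movability of the data of a morphism of inverse systems. -/
def UniformlyCoMovableData {Λ M : Type*} [Preorder Λ] [Preorder M]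
    (X : InvSys C Λ) (Y : InvSys C M) (φ : M → Λ)
    (f : ∀ m : M, X.obj (φ m) ⟶ Y.obj m) : Prop :=
  ∀ m : M, ∃ lam, ∃ h : φ m ≤ lam,
    ∃ r : ∀ b : Λ, X.obj lam ⟶ X.obj b,
      (∀ {b b' : Λ} (hb : b ≤ b'), r b' ≫ X.p hb = r b) ∧
        X.p h ≫ f m = r (φ m) ≫ f m

/-- Equivalence of the data of two morphisms of inverse systems `X → Y`
(the relation defining pro-morphisms). -/
def EquivData {Λ M : Type*} [Preorder Λ] [Preorder M]
    (X : InvSys C Λ) (Y : InvSys C M) (φ φ' : M → Λ)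
    (f : ∀ m : M, X.obj (φ m) ⟶ Y.obj m)
    (f' : ∀ m : M, X.obj (φ' m) ⟶ Y.obj m) : Prop :=
  ∀ m : M, ∃ lam, ∃ h : φ m ≤ lam, ∃ h' : φ' m ≤ lam,
    X.p h ≫ f m = X.p h' ≫ f' m

/-- A morphism of inverse systems. -/
structure InvSysMor {Λ M : Type*} [Preorder Λ] [Preorder M]
    (X : InvSys C Λ) (Y : InvSys C M) where
  φ : M → Λ
  f : ∀ m : M, X.obj (φ m) ⟶ Y.obj m
  comm : ∀ {m m' : M} (hm : m ≤ m'), ∃ lam, ∃ h1 : φ m ≤ lam, ∃ h2 : φ m' ≤ lam,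
    X.p h1 ≫ f m = X.p h2 ≫ f m' ≫ Y.p hm

def InvSysMor.Movable {Λ M : Type*} [Preorder Λ] [Preorder M]
    {X : InvSys C Λ} {Y : InvSys C M} (F : InvSysMor X Y) : Prop :=
  MovableData X Y F.φ F.f

def InvSysMor.StronglyMovable {Λ M : Type*} [Preorder Λ] [Preorder M]
    {X : InvSys C Λ} {Y : InvSys C M} (F : InvSysMor X Y) : Prop :=
  StronglyMovableData X Y F.φ F.f

def InvSysMor.UniformlyMovable {Λ M : Type*} [Preorder Λ] [Preorder M]
    {X : InvSys C Λ} {Y : InvSys C M} (F : InvSysMor X Y) : Prop :=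
  UniformlyMovableData X Y F.φ F.f

def InvSysMor.CoMovable {Λ M : Type*} [Preorder Λ] [Preorder M]
    {X : InvSys C Λ} {Y : InvSys C M} (F : InvSysMor X Y) : Prop :=
  CoMovableData X Y F.φ F.f

def InvSysMor.StronglyCoMovable {Λ M : Type*} [Preorder Λ] [Preorder M]
    {X : InvSys C Λ} {Y : InvSys C M} (F : InvSysMor X Y) : Prop :=
  StronglyCoMovableData X Y F.φ F.f

def InvSysMor.UniformlyCoMovable {Λ M : Type*} [Preorder Λ] [Preorder M]
    {X : InvSys C Λ} {Y : InvSys C M} (F : InvSysMor X Y) : Prop :=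
  UniformlyCoMovableData X Y F.φ F.f

/-- The identity morphism of an inverse system. -/
def InvSys.idMor {Λ : Type*} [Preorder Λ] (X : InvSys C Λ) : InvSysMor X X where
  φ := id
  f a := 𝟙 (X.obj a)
  comm {m m'} hm := ⟨m', hm, le_refl m', by simp [X.p_id]⟩

/-- If `G` is movable, so is the composition `G ∘ F`. -/
theorem comp_movable_of_right {Λ M N : Type*} [Preorder Λ] [IsDirected Λ (· ≤ ·)]
    [Preorder M] [IsDirected M (· ≤ ·)] [Preorder N] [IsDirected N (· ≤ ·)]
    (X : InvSys C Λ) (Y : InvSys C M) (Z : InvSys C N)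
    (F : InvSysMor X Y) (G : InvSysMor Y Z) (hG : G.Movable) :
    MovableData X Z (fun n => F.φ (G.φ n)) (fun n => F.f (G.φ n) ≫ G.f n) := by
  intro n
  obtain ⟨m0, hm0, hmv⟩ := hG n
  obtain ⟨lam, h1, h2, hcomm⟩ := F.comm hm0
  refine ⟨lam, h1, fun n' hn => ?_⟩
  obtain ⟨u, hu⟩ := hmv n' hn
  refine ⟨X.p h2 ≫ F.f m0 ≫ u, ?_⟩
  calc X.p h1 ≫ F.f (G.φ n) ≫ G.f n
      = (X.p h1 ≫ F.f (G.φ n)) ≫ G.f n := by rw [Category.assoc]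
    _ = (X.p h2 ≫ F.f m0 ≫ Y.p hm0) ≫ G.f n := by rw [hcomm]
    _ = X.p h2 ≫ F.f m0 ≫ (Y.p hm0 ≫ G.f n) := by simp [Category.assoc]
    _ = X.p h2 ≫ F.f m0 ≫ (u ≫ Z.p hn) := by rw [hu]
    _ = (X.p h2 ≫ F.f m0 ≫ u) ≫ Z.p hn := by simp [Category.assoc]
end

section
/- If (f_μ, φ) : X → Y and (g_ν, ψ) : Y → Z are morphisms of inverse systems in a category C and (f_μ, φ) is movable, then the composition (h_ν, χ) = (g_ν, ψ) ∘ (f_μ, φ) is also movable. -/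
open CategoryTheory

universe u v

variable {C : Type u} [Category.{v} C]

/-- If `F` is movable, so is the composition `G ∘ F`. -/
theorem comp_movable_of_left {Λ M N : Type*} [Preorder Λ] [IsDirected Λ (· ≤ ·)]
    [Preorder M] [IsDirected M (· ≤ ·)] [Preorder N] [IsDirected N (· ≤ ·)]
    (X : InvSys C Λ) (Y : InvSys C M) (Z : InvSys C N)
    (F : InvSysMor X Y) (G : InvSysMor Y Z) (hF : F.Movable) :
    MovableData X Z (fun n => F.φ (G.φ n)) (fun n => F.f (G.φ n) ≫ G.f n) := by
  intro n
  obtain ⟨lam, h, hmov⟩ := hF (G.φ n)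
  refine ⟨lam, h, fun n' hn => ?_⟩
  obtain ⟨mstar, h1, h2, hcomm⟩ := G.comm hn
  obtain ⟨u', hu'⟩ := hmov mstar h1
  refine ⟨u' ≫ Y.p h2 ≫ G.f n', ?_⟩
  have : u' ≫ (Y.p h2 ≫ G.f n' ≫ Z.p hn) = u' ≫ (Y.p h1 ≫ G.f n) := by
    rw [hcomm]
  simp only [Category.assoc] at this ⊢
  rw [this, ← Category.assoc, hu', Category.assoc]
end

section
/- If a morphism of inverse systems (f_μ, φ) : X → Y is movable and (f'_μ, φ') : X → Y is equivalent to (f_μ, φ) (in the sense defining pro-morphisms), then (f'_μ, φ') is also movable. -/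
open CategoryTheory

universe u v

variable {C : Type u} [Category.{v} C]

/-- Movability is preserved under the equivalence of morphisms of inverse systems. -/
theorem movable_of_equiv {Λ M : Type*} [Preorder Λ] [IsDirected Λ (· ≤ ·)]
    [Preorder M] [IsDirected M (· ≤ ·)]
    (X : InvSys C Λ) (Y : InvSys C M) (F F' : InvSysMor X Y)
    (hF : F.Movable) (hequiv : EquivData X Y F.φ F'.φ F.f F'.f) :
    F'.Movable := by
  intro m
  obtain ⟨lam, h, hlam⟩ := hF m
  obtain ⟨lam0, h0, h0', heq⟩ := hequiv m
  obtain ⟨ls, hl1, hl2⟩ := directed_of (· ≤ ·) lam lam0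
  refine ⟨ls, h0'.trans hl2, fun m' hm => ?_⟩
  obtain ⟨u, hu⟩ := hlam m' hm
  refine ⟨X.p hl1 ≫ u, ?_⟩
  calc X.p (h0'.trans hl2) ≫ F'.f m
      = X.p hl2 ≫ X.p h0' ≫ F'.f m := by rw [← Category.assoc, X.p_comp]
    _ = X.p hl2 ≫ X.p h0 ≫ F.f m := by rw [heq]
    _ = X.p hl1 ≫ X.p h ≫ F.f m := by
        rw [← Category.assoc, ← Category.assoc, X.p_comp, X.p_comp]
    _ = (X.p hl1 ≫ u) ≫ Y.p hm := by rw [hu, Category.assoc]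
end

section
/- If X and Y are inverse systems in pro-C, Y is movable, and X is dominated by Y in pro-C (i.e., there exist pro-morphisms f : X → Y and g : Y → X with g ∘ f = 1_X), then X is movable. -/
open CategoryTheory

universe u v

variable {C : Type u} [Category.{v} C]

/-- If `Y` is movable and `X` is dominated by `Y` in pro-`C`
(`G ∘ F` is equivalent to the identity of `X`), then `X` is movable. -/
theorem movable_of_dominated {Λ M : Type*} [Preorder Λ] [IsDirected Λ (· ≤ ·)]
    [Preorder M] [IsDirected M (· ≤ ·)]
    (X : InvSys C Λ) (Y : InvSys C M) (hY : Y.Movable)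
    (F : InvSysMor X Y) (G : InvSysMor Y X)
    (hdom : EquivData X X (fun a => F.φ (G.φ a)) id
      (fun a => F.f (G.φ a) ≫ G.f a) (fun a => 𝟙 (X.obj a))) :
    X.Movable := by
  intro a
  obtain ⟨m', hmm', hs⟩ := hY (G.φ a)
  obtain ⟨lam0, h0f, h0a, hdom0⟩ := hdom a
  obtain ⟨lam1, h1f, h1f', hF⟩ := F.comm hmm'
  obtain ⟨a', ha0, ha1⟩ := directed_of (· ≤ ·) lam0 lam1
  refine ⟨a', h0a.trans ha0, ?_⟩
  intro a'' ha''
  obtain ⟨mu, hmu, hmu'', hG⟩ := G.comm ha''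
  obtain ⟨s, hs'⟩ := hs mu hmu
  refine ⟨X.p (h1f'.trans ha1) ≫ F.f m' ≫ s ≫ Y.p hmu'' ≫ G.f a'', ?_⟩
  have key : Y.p hmu'' ≫ G.f a'' ≫ X.p ha'' = Y.p hmu ≫ G.f a := hG.symm
  calc (X.p (h1f'.trans ha1) ≫ F.f m' ≫ s ≫ Y.p hmu'' ≫ G.f a'') ≫ X.p ha''
      = X.p (h1f'.trans ha1) ≫ F.f m' ≫ s ≫ (Y.p hmu'' ≫ G.f a'' ≫ X.p ha'') := by
        simp only [Category.assoc]
    _ = X.p (h1f'.trans ha1) ≫ F.f m' ≫ (s ≫ Y.p hmu) ≫ G.f a := by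
        rw [key]; simp only [Category.assoc]
    _ = X.p (h1f'.trans ha1) ≫ F.f m' ≫ Y.p hmm' ≫ G.f a := by rw [hs']
    _ = X.p ha1 ≫ (X.p h1f' ≫ F.f m' ≫ Y.p hmm') ≫ G.f a := by
        rw [← X.p_comp h1f' ha1]; simp only [Category.assoc]
    _ = X.p ha1 ≫ (X.p h1f ≫ F.f (G.φ a)) ≫ G.f a := by rw [← hF]
    _ = X.p ha0 ≫ X.p h0f ≫ F.f (G.φ a) ≫ G.f a := by
        simp only [← Category.assoc, X.p_comp]
    _ = X.p ha0 ≫ X.p h0a := by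
        rw [show X.p h0f ≫ F.f (G.φ a) ≫ G.f a = X.p h0a from by simpa using hdom0]
    _ = X.p (h0a.trans ha0) := X.p_comp h0a ha0
end

section
/- Every morphism of inverse systems of pointed sets with the Mittag-Leffler property is movable. -/
universe u

/-- An inverse system of pointed sets. -/
structure PtInvSys (Λ : Type*) [Preorder Λ] where
  obj : Λ → Type u
  pt : ∀ a : Λ, obj a
  p : ∀ {a b : Λ}, a ≤ b → obj b → obj a
  p_pt : ∀ {a b : Λ} (h : a ≤ b), p h (pt b) = pt a
  p_id : ∀ (a : Λ) (x : obj a), p (le_refl a) x = x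
  p_comp : ∀ {a b c : Λ} (h1 : a ≤ b) (h2 : b ≤ c) (x : obj c),
    p h1 (p h2 x) = p (h1.trans h2) x

/-- A morphism of inverse systems of pointed sets. -/
structure PtMor {Λ M : Type*} [Preorder Λ] [Preorder M]
    (X : PtInvSys.{u} Λ) (Y : PtInvSys.{u} M) where
  φ : M → Λ
  f : ∀ m : M, X.obj (φ m) → Y.obj m
  f_pt : ∀ m : M, f m (X.pt (φ m)) = Y.pt m
  comm : ∀ {m m' : M} (hm : m ≤ m'), ∃ lam, ∃ h1 : φ m ≤ lam, ∃ h2 : φ m' ≤ lam,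
    ∀ x : X.obj lam, f m (X.p h1 x) = Y.p hm (f m' (X.p h2 x))

/-- The Mittag-Leffler property for a morphism of inverse systems of pointed sets. -/
def PtMor.ML {Λ M : Type*} [Preorder Λ] [Preorder M]
    {X : PtInvSys.{u} Λ} {Y : PtInvSys.{u} M} (F : PtMor X Y) : Prop :=
  ∀ m : M, ∃ lam, ∃ h : F.φ m ≤ lam, ∀ lam', ∀ h' : lam ≤ lam',
    Set.range (fun x : X.obj lam' => F.f m (X.p (h.trans h') x)) =
      Set.range (fun x : X.obj lam => F.f m (X.p h x))

/-- Movability for a morphism of inverse systems of pointed sets. -/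
def PtMor.Movable {Λ M : Type*} [Preorder Λ] [Preorder M]
    {X : PtInvSys.{u} Λ} {Y : PtInvSys.{u} M} (F : PtMor X Y) : Prop :=
  ∀ m : M, ∃ lam, ∃ h : F.φ m ≤ lam, ∀ m', ∀ hm : m ≤ m',
    ∃ u : X.obj lam → Y.obj m', u (X.pt lam) = Y.pt m' ∧
      ∀ x : X.obj lam, F.f m (X.p h x) = Y.p hm (u x)

/-- Co-movability for a morphism of inverse systems of pointed sets. -/
def PtMor.CoMovable {Λ M : Type*} [Preorder Λ] [Preorder M]
    {X : PtInvSys.{u} Λ} {Y : PtInvSys.{u} M} (F : PtMor X Y) : Prop :=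
  ∀ m : M, ∃ lam, ∃ h : F.φ m ≤ lam, ∀ lam', ∀ h' : F.φ m ≤ lam',
    ∃ r : X.obj lam → X.obj lam', r (X.pt lam) = X.pt lam' ∧
      ∀ x : X.obj lam, F.f m (X.p h x) = F.f m (X.p h' (r x))

/-- A morphism of inverse systems of pointed sets with the Mittag-Leffler
property is movable. -/
theorem ptMor_movable_of_ML {Λ M : Type*} [Preorder Λ] [IsDirected Λ (· ≤ ·)]
    [Preorder M] [IsDirected M (· ≤ ·)]
    {X : PtInvSys.{u} Λ} {Y : PtInvSys.{u} M} (F : PtMor X Y)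
    (hML : F.ML) : F.Movable := by
  classical
  intro m
  obtain ⟨lam, h, hml⟩ := hML m
  refine ⟨lam, h, ?_⟩
  intro m' hm
  obtain ⟨lam₀, h1, h2, hcomm⟩ := F.comm hm
  obtain ⟨lam₁, hA, hB⟩ := directed_of (· ≤ ·) lam lam₀
  have hrange := hml lam₁ hA
  have hsel : ∀ x : X.obj lam, ∃ x₁ : X.obj lam₁,
      F.f m (X.p (h.trans hA) x₁) = F.f m (X.p h x) := by
    intro x
    have hx : F.f m (X.p h x) ∈
        Set.range (fun x₁ : X.obj lam₁ => F.f m (X.p (h.trans hA) x₁)) := by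
      rw [hrange]; exact ⟨x, rfl⟩
    exact hx
  refine ⟨fun x => if hx : x = X.pt lam then Y.pt m'
    else F.f m' (X.p (h2.trans hB) (Classical.choose (hsel x))), by simp, ?_⟩
  intro x
  by_cases hx : x = X.pt lam
  · subst hx
    simp [X.p_pt, F.f_pt, Y.p_pt]
  · simp only [dif_neg hx]
    have hc := Classical.choose_spec (hsel x)
    set x₁ := Classical.choose (hsel x) with hx₁
    have hco := hcomm (X.p hB x₁)
    rw [X.p_comp, X.p_comp] at hco
    rw [← hc, hco]
end

section
/- Let F = (F_λ, p_{λλ'}, Λ) be an inverse system of free groups and G = (G_μ, q_{μμ'}, M) an inverse system of groups. If a morphism (f_μ, φ) : F → G is movable as a morphism of inverse systems of pointed sets, then it is movable as a morphism of inverse systems of groups (i.e., the movability witnesses can be chosen to be group homomorphisms). -/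
open CategoryTheory

universe u

/-- An inverse system of groups. -/
structure GrpInvSys (Λ : Type*) [Preorder Λ] where
  obj : Λ → GrpCat.{u}
  p : ∀ {a b : Λ}, a ≤ b → (obj b ⟶ obj a)
  p_id : ∀ a : Λ, p (le_refl a) = 𝟙 (obj a)
  p_comp : ∀ {a b c : Λ} (h1 : a ≤ b) (h2 : b ≤ c), p h2 ≫ p h1 = p (h1.trans h2)

/-- A morphism of inverse systems of groups. -/
structure GrpMor {Λ M : Type*} [Preorder Λ] [Preorder M]
    (X : GrpInvSys.{u} Λ) (Y : GrpInvSys.{u} M) where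
  φ : M → Λ
  f : ∀ m : M, X.obj (φ m) ⟶ Y.obj m
  comm : ∀ {m m' : M} (hm : m ≤ m'), ∃ lam, ∃ h1 : φ m ≤ lam, ∃ h2 : φ m' ≤ lam,
    X.p h1 ≫ f m = X.p h2 ≫ f m' ≫ Y.p hm

/-- Movability of a morphism of inverse systems of groups regarded as a morphism
of inverse systems of pointed sets (base points the identity elements): the
witnesses `u` are only required to be pointed maps. -/
def GrpMor.PtMovable {Λ M : Type*} [Preorder Λ] [Preorder M]
    {X : GrpInvSys.{u} Λ} {Y : GrpInvSys.{u} M} (F : GrpMor X Y) : Prop :=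
  ∀ m : M, ∃ lam, ∃ h : F.φ m ≤ lam, ∀ m', ∀ hm : m ≤ m',
    ∃ u : ↥(X.obj lam) → ↥(Y.obj m'), u 1 = 1 ∧
      ∀ x : ↥(X.obj lam), (F.f m) ((X.p h) x) = (Y.p hm) (u x)

/-- Movability of a morphism of inverse systems of groups in pro-Grp: the
witnesses are group homomorphisms. -/
def GrpMor.Movable {Λ M : Type*} [Preorder Λ] [Preorder M]
    {X : GrpInvSys.{u} Λ} {Y : GrpInvSys.{u} M} (F : GrpMor X Y) : Prop :=
  ∀ m : M, ∃ lam, ∃ h : F.φ m ≤ lam, ∀ m', ∀ hm : m ≤ m',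
    ∃ u : X.obj lam ⟶ Y.obj m', X.p h ≫ F.f m = u ≫ Y.p hm

/-- A morphism from an inverse system of free groups to an inverse system of
groups which is movable in pro-Set₊ is movable in pro-Grp. -/
theorem grpMor_movable_of_ptMovable {Λ M : Type*} [Preorder Λ] [IsDirected Λ (· ≤ ·)]
    [Preorder M] [IsDirected M (· ≤ ·)]
    (F : GrpInvSys.{u} Λ) (G : GrpInvSys.{u} M)
    (hfree : ∀ a : Λ, IsFreeGroup (F.obj a))
    (f : GrpMor F G) (hpt : f.PtMovable) : f.Movable := by
  intro m
  obtain ⟨lam, h, H⟩ := hpt m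
  refine ⟨lam, h, fun m' hm => ?_⟩
  obtain ⟨u, hu1, hu⟩ := H m' hm
  haveI := hfree lam
  refine ⟨GrpCat.ofHom (IsFreeGroup.lift (fun b => u (IsFreeGroup.of b))), ?_⟩
  have key : ((f.f m).hom.comp (F.p h).hom : F.obj lam →* G.obj m)
      = (G.p hm).hom.comp (IsFreeGroup.lift (fun b => u (IsFreeGroup.of b))) := by
    apply IsFreeGroup.ext_hom
    intro a
    simp only [MonoidHom.comp_apply, IsFreeGroup.lift_of]
    exact hu _
  exact GrpCat.hom_ext key
end

section
/- If (g_ν, ψ) : Y → Z is a strongly movable morphism of inverse systems, then for any morphism (f_μ, φ) : X → Y the composition (g_ν, ψ) ∘ (f_μ, φ) is strongly movable. -/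
open CategoryTheory

universe u v

variable {C : Type u} [Category.{v} C]

/-- If `G` is strongly movable, so is the composition `G ∘ F`. -/
theorem comp_stronglyMovable_of_right {Λ M N : Type*} [Preorder Λ] [IsDirected Λ (· ≤ ·)]
    [Preorder M] [IsDirected M (· ≤ ·)] [Preorder N] [IsDirected N (· ≤ ·)]
    (X : InvSys C Λ) (Y : InvSys C M) (Z : InvSys C N)
    (F : InvSysMor X Y) (G : InvSysMor Y Z) (hG : G.StronglyMovable) :
    StronglyMovableData X Z (fun n => F.φ (G.φ n)) (fun n => F.f (G.φ n) ≫ G.f n) := by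
  intro n
  obtain ⟨m₀, hm₀, H⟩ := hG n
  obtain ⟨lam₀, hl₀, hl₀', hcomm₀⟩ := F.comm hm₀
  refine ⟨lam₀, hl₀, ?_⟩
  intro n' hn
  obtain ⟨mstar, hms1, hms2, u, hu1, hu2⟩ := H n' hn
  obtain ⟨l₁, hl₁a, hl₁b, hc₁⟩ := F.comm hms2
  obtain ⟨l₂, hl₂a, hl₂b, hc₂⟩ := F.comm hms1
  obtain ⟨l₃, h₃1, h₃2⟩ := directed_of (· ≤ ·) l₁ l₂
  obtain ⟨lstar, hs1, hs2⟩ := directed_of (· ≤ ·) lam₀ l₃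
  have hs₁ : l₁ ≤ lstar := h₃1.trans hs2
  have hs₂ : l₂ ≤ lstar := h₃2.trans hs2
  refine ⟨lstar, hs1, hl₁a.trans hs₁, X.p hl₀' ≫ F.f m₀ ≫ u, ?_, ?_⟩
  · calc (X.p hl₀' ≫ F.f m₀ ≫ u) ≫ Z.p hn
        = X.p hl₀' ≫ F.f m₀ ≫ (u ≫ Z.p hn) := by simp [Category.assoc]
      _ = X.p hl₀' ≫ F.f m₀ ≫ Y.p hm₀ ≫ G.f n := by rw [hu1]
      _ = (X.p hl₀' ≫ F.f m₀ ≫ Y.p hm₀) ≫ G.f n := by simp [Category.assoc]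
      _ = (X.p hl₀ ≫ F.f (G.φ n)) ≫ G.f n := by rw [hcomm₀]
      _ = X.p hl₀ ≫ (fun n => F.f (G.φ n) ≫ G.f n) n := by simp [Category.assoc]
  · calc X.p hs1 ≫ X.p hl₀' ≫ F.f m₀ ≫ u
        = (X.p hs₂ ≫ X.p hl₂a) ≫ F.f m₀ ≫ u := by
          simp only [← Category.assoc, X.p_comp]
      _ = X.p hs₂ ≫ (X.p hl₂a ≫ F.f m₀) ≫ u := by simp [Category.assoc]
      _ = X.p hs₂ ≫ (X.p hl₂b ≫ F.f mstar ≫ Y.p hms1) ≫ u := by rw [hc₂]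
      _ = (X.p hs₂ ≫ X.p hl₂b) ≫ F.f mstar ≫ (Y.p hms1 ≫ u) := by
          simp [Category.assoc]
      _ = (X.p hs₁ ≫ X.p hl₁b) ≫ F.f mstar ≫ (Y.p hms2 ≫ G.f n') := by
          rw [hu2]; simp only [← Category.assoc, X.p_comp]
      _ = X.p hs₁ ≫ (X.p hl₁b ≫ F.f mstar ≫ Y.p hms2) ≫ G.f n' := by
          simp [Category.assoc]
      _ = X.p hs₁ ≫ (X.p hl₁a ≫ F.f (G.φ n')) ≫ G.f n' := by rw [hc₁]
      _ = X.p (hl₁a.trans hs₁) ≫ (fun n => F.f (G.φ n) ≫ G.f n) n' := by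
          rw [← X.p_comp hl₁a hs₁]; simp [Category.assoc]
end

section
/- If (f_μ, φ) : X → Y is a strongly movable morphism of inverse systems, then for any morphism (g_ν, ψ) : Y → Z the composition (g_ν, ψ) ∘ (f_μ, φ) is strongly movable. In particular, any morphism out of a strongly movable inverse system is strongly movable. -/
open CategoryTheory

universe u v

variable {C : Type u} [Category.{v} C]

/-- If `F` is strongly movable, so is the composition `G ∘ F`; in particular any
morphism out of a strongly movable inverse system is strongly movable. -/
theorem comp_stronglyMovable_of_left {Λ M N : Type*} [Preorder Λ] [IsDirected Λ (· ≤ ·)]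
    [Preorder M] [IsDirected M (· ≤ ·)] [Preorder N] [IsDirected N (· ≤ ·)]
    (X : InvSys C Λ) (Y : InvSys C M) (Z : InvSys C N)
    (F : InvSysMor X Y) (G : InvSysMor Y Z) :
    (F.StronglyMovable →
      StronglyMovableData X Z (fun n => F.φ (G.φ n)) (fun n => F.f (G.φ n) ≫ G.f n)) ∧
    (X.StronglyMovable → F.StronglyMovable) := by
  constructor
  · intro hF n
    obtain ⟨lam, h, hP⟩ := hF (G.φ n)
    refine ⟨lam, h, fun n' hn => ?_⟩
    obtain ⟨mu, k1, k2, hk⟩ := G.comm hn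
    obtain ⟨lstar, h1, h2, u0, hu1, hu2⟩ := hP mu k1
    obtain ⟨c, hc1, hc2, hc⟩ := F.comm k2
    obtain ⟨d, hd1, hd2⟩ := directed_of (· ≤ ·) lstar c
    refine ⟨d, h1.trans hd1, hc1.trans hd2, u0 ≫ Y.p k2 ≫ G.f n', ?_, ?_⟩
    · have : (Y.p k2 ≫ G.f n') ≫ Z.p hn = Y.p k1 ≫ G.f n := by
        simpa using hk.symm
      calc (u0 ≫ Y.p k2 ≫ G.f n') ≫ Z.p hn
          = u0 ≫ (Y.p k2 ≫ G.f n') ≫ Z.p hn := by simp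
        _ = u0 ≫ Y.p k1 ≫ G.f n := by rw [this]
        _ = (u0 ≫ Y.p k1) ≫ G.f n := by simp
        _ = X.p h ≫ F.f (G.φ n) ≫ G.f n := by rw [hu1]; simp
    · have e1 : X.p (h1.trans hd1) = X.p hd1 ≫ X.p h1 := (X.p_comp h1 hd1).symm
      have e2 : X.p (h2.trans hd1) = X.p hd2 ≫ X.p hc2 := by
        rw [X.p_comp hc2 hd2]
      calc X.p (h1.trans hd1) ≫ u0 ≫ Y.p k2 ≫ G.f n'
          = X.p hd1 ≫ (X.p h1 ≫ u0) ≫ Y.p k2 ≫ G.f n' := by rw [e1]; simp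
        _ = X.p hd1 ≫ (X.p h2 ≫ F.f mu) ≫ Y.p k2 ≫ G.f n' := by rw [hu2]
        _ = X.p (h2.trans hd1) ≫ (F.f mu ≫ Y.p k2) ≫ G.f n' := by
            rw [← X.p_comp h2 hd1]; simp
        _ = X.p hd2 ≫ (X.p hc2 ≫ F.f mu ≫ Y.p k2) ≫ G.f n' := by rw [e2]; simp
        _ = X.p hd2 ≫ (X.p hc1 ≫ F.f (G.φ n')) ≫ G.f n' := by rw [← hc]
        _ = X.p (hc1.trans hd2) ≫ F.f (G.φ n') ≫ G.f n' := by
            rw [← X.p_comp hc1 hd2]; simp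
  · intro hX m
    obtain ⟨a', h', hP⟩ := hX (F.φ m)
    refine ⟨a', h', fun m' hm => ?_⟩
    obtain ⟨b, hb1, hb2, hb⟩ := F.comm hm
    obtain ⟨astar, h1, h2, r, hr1, hr2⟩ := hP b hb1
    refine ⟨astar, h1, hb2.trans h2, r ≫ X.p hb2 ≫ F.f m', ?_, ?_⟩
    · calc (r ≫ X.p hb2 ≫ F.f m') ≫ Y.p hm
          = r ≫ X.p hb2 ≫ F.f m' ≫ Y.p hm := by simp
        _ = r ≫ X.p hb1 ≫ F.f m := by rw [← hb]
        _ = (r ≫ X.p hb1) ≫ F.f m := by simp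
        _ = X.p h' ≫ F.f m := by rw [hr1]
    · calc X.p h1 ≫ r ≫ X.p hb2 ≫ F.f m'
          = (X.p h1 ≫ r) ≫ X.p hb2 ≫ F.f m' := by simp
        _ = (X.p h2 ≫ X.p hb2) ≫ F.f m' := by rw [hr2]; simp
        _ = X.p (hb2.trans h2) ≫ F.f m' := by rw [X.p_comp hb2 h2]
end

section
/- If (f_μ, φ) and (f'_μ, φ') are equivalent morphisms of inverse systems X → Y and (f_μ, φ) is strongly movable, then (f'_μ, φ') is strongly movable. -/
open CategoryTheory

universe u v

variable {C : Type u} [Category.{v} C]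

/-- Strong movability is preserved under the equivalence of morphisms of inverse systems. -/
theorem stronglyMovable_of_equiv {Λ M : Type*} [Preorder Λ] [IsDirected Λ (· ≤ ·)]
    [Preorder M] [IsDirected M (· ≤ ·)]
    (X : InvSys C Λ) (Y : InvSys C M) (F F' : InvSysMor X Y)
    (hF : F.StronglyMovable) (hequiv : EquivData X Y F.φ F'.φ F.f F'.f) :
    F'.StronglyMovable := by
  intro m
  obtain ⟨lam, hlam, hmain⟩ := hF m
  obtain ⟨lam₀, h₀, h₀', heq⟩ := hequiv m
  obtain ⟨lam', hl1, hl2⟩ := directed_of (· ≤ ·) lam lam₀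
  refine ⟨lam', h₀'.trans hl2, ?_⟩
  intro m' hm
  obtain ⟨lstar, hs1, hs2, u, hu1, hu2⟩ := hmain m' hm
  obtain ⟨lam₁, h₁, h₁', heq'⟩ := hequiv m'
  obtain ⟨lstar', ht1, ht2⟩ := directed_of (· ≤ ·) lstar lam₁
  obtain ⟨lstar'', hq1, hq2⟩ := directed_of (· ≤ ·) lam' lstar'
  refine ⟨lstar'', hq1, h₁'.trans (ht2.trans hq2), X.p hl1 ≫ u, ?_, ?_⟩
  · calc (X.p hl1 ≫ u) ≫ Y.p hm = X.p hl1 ≫ X.p hlam ≫ F.f m := by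
          rw [Category.assoc, hu1]
      _ = X.p (hlam.trans hl1) ≫ F.f m := by rw [← Category.assoc, X.p_comp]
      _ = X.p hl2 ≫ X.p h₀ ≫ F.f m := by rw [← Category.assoc, X.p_comp]
      _ = X.p hl2 ≫ X.p h₀' ≫ F'.f m := by rw [heq]
      _ = X.p (h₀'.trans hl2) ≫ F'.f m := by rw [← Category.assoc, X.p_comp]
  · calc X.p hq1 ≫ X.p hl1 ≫ u
        = X.p (hl1.trans hq1) ≫ u := by rw [← Category.assoc, X.p_comp]
      _ = X.p (ht1.trans hq2) ≫ X.p hs1 ≫ u := by rw [← Category.assoc, X.p_comp]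
      _ = X.p (ht1.trans hq2) ≫ X.p hs2 ≫ F.f m' := by rw [hu2]
      _ = X.p (hs2.trans (ht1.trans hq2)) ≫ F.f m' := by
          rw [← Category.assoc, X.p_comp]
      _ = X.p (ht2.trans hq2) ≫ X.p h₁ ≫ F.f m' := by
          rw [← Category.assoc, X.p_comp]
      _ = X.p (ht2.trans hq2) ≫ X.p h₁' ≫ F'.f m' := by rw [heq']
      _ = X.p (h₁'.trans (ht2.trans hq2)) ≫ F'.f m' := by
          rw [← Category.assoc, X.p_comp]
end

section
/- If (g_ν, ψ) : Y → Z is uniformly movable, then for any morphism of inverse systems (f_μ, φ) : X → Y, the composition (g_ν, ψ) ∘ (f_μ, φ) is uniformly movable; similarly, if (f_μ, φ) is uniformly movable then the composition is uniformly movable. -/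
open CategoryTheory

universe u v

variable {C : Type u} [Category.{v} C]

/-- If either factor is uniformly movable, so is the composition `G ∘ F`. -/
theorem comp_uniformlyMovable {Λ M N : Type*} [Preorder Λ] [IsDirected Λ (· ≤ ·)]
    [Preorder M] [IsDirected M (· ≤ ·)] [Preorder N] [IsDirected N (· ≤ ·)]
    (X : InvSys C Λ) (Y : InvSys C M) (Z : InvSys C N)
    (F : InvSysMor X Y) (G : InvSysMor Y Z) :
    (G.UniformlyMovable →
      UniformlyMovableData X Z (fun n => F.φ (G.φ n)) (fun n => F.f (G.φ n) ≫ G.f n)) ∧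
    (F.UniformlyMovable →
      UniformlyMovableData X Z (fun n => F.φ (G.φ n)) (fun n => F.f (G.φ n) ≫ G.f n)) := by
  constructor
  · intro hG n
    obtain ⟨mu, hmu, u, hu, hun⟩ := hG n
    obtain ⟨lam, h1, h2, hcomm⟩ := F.comm hmu
    refine ⟨lam, h1, fun n1 => X.p h2 ≫ F.f mu ≫ u n1, ?_, ?_⟩
    · intro n1 n2 hb
      simp only [Category.assoc, hu hb]
    · dsimp only
      have key : (X.p h2 ≫ F.f mu) ≫ Y.p hmu = X.p h1 ≫ F.f (G.φ n) := by
        rw [Category.assoc]; exact hcomm.symm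
      rw [hun, ← Category.assoc, ← Category.assoc, key, Category.assoc]
  · intro hF n
    obtain ⟨lam, h, u, hu, hun⟩ := hF (G.φ n)
    refine ⟨lam, h, fun n1 => u (G.φ n1) ≫ G.f n1, ?_, ?_⟩
    · intro n1 n2 hb
      obtain ⟨mu, h1, h2, hcomm⟩ := G.comm hb
      have e1 : u mu ≫ Y.p h1 = u (G.φ n1) := hu h1
      have e2 : u mu ≫ Y.p h2 = u (G.φ n2) := hu h2
      dsimp only
      rw [← e1, ← e2]
      simp only [Category.assoc, ← hcomm]
    · dsimp only; rw [hun, Category.assoc]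
end

section
/- If X and Y are inverse systems in pro-C, Y is uniformly movable, and X is dominated by Y in pro-C, then X is uniformly movable. -/
open CategoryTheory

universe u v

variable {C : Type u} [Category.{v} C]

/-- If `Y` is uniformly movable and `X` is dominated by `Y` in pro-`C`,
then `X` is uniformly movable. -/
theorem uniformlyMovable_of_dominated {Λ M : Type*} [Preorder Λ] [IsDirected Λ (· ≤ ·)]
    [Preorder M] [IsDirected M (· ≤ ·)]
    (X : InvSys C Λ) (Y : InvSys C M) (hY : Y.UniformlyMovable)
    (F : InvSysMor X Y) (G : InvSysMor Y X)
    (hdom : EquivData X X (fun a => F.φ (G.φ a)) id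
      (fun a => F.f (G.φ a) ≫ G.f a) (fun a => 𝟙 (X.obj a))) :
    X.UniformlyMovable := by
  intro a
  obtain ⟨lam, h, h', hdomeq⟩ := hdom a
  obtain ⟨m', hmm', u, hu_nat, hu_m⟩ := hY (G.φ a)
  obtain ⟨nu, h1, h2, hF⟩ := F.comm hmm'
  obtain ⟨a', hnua', hlama'⟩ := directed_of (· ≤ ·) nu lam
  refine ⟨a', h'.trans hlama',
    fun b => X.p (h2.trans hnua') ≫ F.f m' ≫ u (G.φ b) ≫ G.f b, ?_, ?_⟩
  · intro b b' hb
    obtain ⟨mu, g1, g2, hG⟩ := G.comm hb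
    have e1 : u (G.φ b) = u mu ≫ Y.p g1 := (hu_nat g1).symm
    have e2 : u (G.φ b') = u mu ≫ Y.p g2 := (hu_nat g2).symm
    simp only [e1, e2, Category.assoc, ← hG]
  · show X.p (h2.trans hnua') ≫ F.f m' ≫ u (G.φ a) ≫ G.f a = X.p (h'.trans hlama')
    have hkey : X.p (h2.trans hnua') = X.p hnua' ≫ X.p h2 := (X.p_comp h2 hnua').symm
    rw [hu_m, hkey, Category.assoc]
    have : X.p h2 ≫ F.f m' ≫ Y.p hmm' ≫ G.f a = X.p h1 ≫ F.f (G.φ a) ≫ G.f a := by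
      have := hF
      simp only [← Category.assoc] at this ⊢
      rw [← this]
    rw [this, ← Category.assoc, X.p_comp h1 hnua']
    have h1' : X.p (h1.trans hnua') = X.p hlama' ≫ X.p h := (X.p_comp h hlama').symm
    rw [h1', Category.assoc, hdomeq]
    simp [X.p_comp]
end

section
/- A morphism of inverse systems of pointed sets is co-movable if and only if it has the Mittag-Leffler property. -/
universe u

/-- A morphism of inverse systems of pointed sets is co-movable iff it has the
Mittag-Leffler property. -/
theorem ptMor_coMovable_iff_ML {Λ M : Type*} [Preorder Λ] [IsDirected Λ (· ≤ ·)]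
    [Preorder M] [IsDirected M (· ≤ ·)]
    {X : PtInvSys.{u} Λ} {Y : PtInvSys.{u} M} (F : PtMor X Y) :
    F.CoMovable ↔ F.ML := by
  classical
  constructor
  · intro hcm m
    obtain ⟨lam, h, hr⟩ := hcm m
    refine ⟨lam, h, fun lam' h' => ?_⟩
    apply Set.Subset.antisymm
    · rintro y ⟨x, rfl⟩
      refine ⟨X.p h' x, ?_⟩
      show F.f m (X.p h (X.p h' x)) = F.f m (X.p (h.trans h') x)
      rw [X.p_comp]
    · rintro y ⟨x, rfl⟩
      obtain ⟨r, -, hr2⟩ := hr lam' (h.trans h')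
      exact ⟨r x, (hr2 x).symm⟩
  · intro hml m
    obtain ⟨lam, h, hr⟩ := hml m
    refine ⟨lam, h, fun lam' h' => ?_⟩
    obtain ⟨lam'', h1, h2⟩ := directed_of (· ≤ ·) lam lam'
    have hrange := hr lam'' h1
    have key : ∀ x : X.obj lam, ∃ z : X.obj lam'',
        F.f m (X.p (h.trans h1) z) = F.f m (X.p h x) := by
      intro x
      have : F.f m (X.p h x) ∈ Set.range (fun z : X.obj lam'' =>
          F.f m (X.p (h.trans h1) z)) := by
        rw [hrange]; exact ⟨x, rfl⟩
      exact this
    refine ⟨fun x => if x = X.pt lam then X.pt lam'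
      else X.p h2 (key x).choose, by simp, fun x => ?_⟩
    by_cases hx : x = X.pt lam
    · subst hx
      simp [X.p_pt, F.f_pt]
    · simp only [hx, if_false]
      rw [X.p_comp]
      have := (key x).choose_spec
      have heq : h'.trans h2 = h.trans h1 := rfl
      rw [heq, this]
end

section
/- If (f_μ, φ) : X → Y is a co-movable morphism of inverse systems, then for any morphism (g_ν, ψ) : Y → Z, the composition (g_ν, ψ) ∘ (f_μ, φ) is co-movable; the same holds for strong and uniform co-movability. -/
open CategoryTheory

universe u v

variable {C : Type u} [Category.{v} C]

/-- If `F` is (strongly, uniformly) co-movable, so is the composition `G ∘ F`. -/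
theorem comp_coMovable_of_left {Λ M N : Type*} [Preorder Λ] [IsDirected Λ (· ≤ ·)]
    [Preorder M] [IsDirected M (· ≤ ·)] [Preorder N] [IsDirected N (· ≤ ·)]
    (X : InvSys C Λ) (Y : InvSys C M) (Z : InvSys C N)
    (F : InvSysMor X Y) (G : InvSysMor Y Z) :
    (F.CoMovable →
      CoMovableData X Z (fun n => F.φ (G.φ n)) (fun n => F.f (G.φ n) ≫ G.f n)) ∧
    (F.StronglyCoMovable →
      StronglyCoMovableData X Z (fun n => F.φ (G.φ n)) (fun n => F.f (G.φ n) ≫ G.f n)) ∧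
    (F.UniformlyCoMovable →
      UniformlyCoMovableData X Z (fun n => F.φ (G.φ n)) (fun n => F.f (G.φ n) ≫ G.f n)) := by
  refine ⟨?_, ?_, ?_⟩
  · intro hF n
    obtain ⟨lam, h, hr⟩ := hF (G.φ n)
    refine ⟨lam, h, fun lam' h' => ?_⟩
    obtain ⟨r, hr'⟩ := hr lam' h'
    exact ⟨r, by rw [← Category.assoc, hr']; simp only [Category.assoc]⟩
  · intro hF n
    obtain ⟨lam, h, hr⟩ := hF (G.φ n)
    refine ⟨lam, h, fun lam' h' => ?_⟩
    obtain ⟨r, hr', lstar, h1, h2, hs⟩ := hr lam' h'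
    exact ⟨r, by rw [← Category.assoc, hr']; simp only [Category.assoc],
      lstar, h1, h2, hs⟩
  · intro hF n
    obtain ⟨lam, h, r, hcomp, hr⟩ := hF (G.φ n)
    exact ⟨lam, h, r, fun {b b'} hb => hcomp hb,
      by rw [← Category.assoc, hr]; simp only [Category.assoc]⟩
end

section
/- Let f = [(f_μ, φ)] : X → Y be a pro-morphism between inverse systems, with inverse limits p = (p_λ) : X∞ → X and q = (q_μ) : Y∞ → Y, and induced limit morphism f∞ : X∞ → Y∞ satisfying q ∘ f∞ = f ∘ p. If f∞ is an epimorphism in C, f is uniformly movable, and for each μ ∈ M the composition f_μ ∘ p_{φ(μ)} is an epimorphism in C, then f is an epimorphism in pro-C. -/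
open CategoryTheory

universe u v

variable {C : Type u} [Category.{v} C]

/-- If `lim f` is an epimorphism, `f` is uniformly movable and each `f_μ ∘ p_{φ(μ)}`
is an epimorphism, then `f` is an epimorphism in pro-`C`. -/
theorem epi_in_pro_of_uniformlyMovable {Λ M : Type*} [Preorder Λ] [IsDirected Λ (· ≤ ·)]
    [Preorder M] [IsDirected M (· ≤ ·)]
    (X : InvSys C Λ) (Y : InvSys C M) (F : InvSysMor X Y)
    (Xinf Yinf : C)
    (pcone : ∀ a : Λ, Xinf ⟶ X.obj a)
    (qcone : ∀ m : M, Yinf ⟶ Y.obj m)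
    (hp : ∀ {a a' : Λ} (h : a ≤ a'), pcone a' ≫ X.p h = pcone a)
    (hq : ∀ {m m' : M} (h : m ≤ m'), qcone m' ≫ Y.p h = qcone m)
    (hXlim : ∀ (W : C) (w : ∀ a : Λ, W ⟶ X.obj a),
      (∀ {a a' : Λ} (h : a ≤ a'), w a' ≫ X.p h = w a) →
        ∃! t : W ⟶ Xinf, ∀ a, t ≫ pcone a = w a)
    (hYlim : ∀ (W : C) (w : ∀ m : M, W ⟶ Y.obj m),
      (∀ {m m' : M} (h : m ≤ m'), w m' ≫ Y.p h = w m) →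
        ∃! t : W ⟶ Yinf, ∀ m, t ≫ qcone m = w m)
    (finf : Xinf ⟶ Yinf)
    (hfinf : ∀ m : M, finf ≫ qcone m = pcone (F.φ m) ≫ F.f m)
    (hepi : Epi finf)
    (huni : F.UniformlyMovable)
    (hcomp : ∀ m : M, Epi (pcone (F.φ m) ≫ F.f m)) :
    ∀ (N : Type*) [Preorder N] [IsDirected N (· ≤ ·)] (Z : InvSys C N)
      (G G' : InvSysMor Y Z),
      EquivData X Z (fun n => F.φ (G.φ n)) (fun n => F.φ (G'.φ n))
        (fun n => F.f (G.φ n) ≫ G.f n) (fun n => F.f (G'.φ n) ≫ G'.f n) →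
      EquivData Y Z G.φ G'.φ G.f G'.f := by
  intro N _ _ Z G G' hEq n
  set m := G.φ n with hm
  set m' := G'.φ n with hm'
  -- Step 1: qcone m ≫ G.f n = qcone m' ≫ G'.f n
  obtain ⟨lam₀, h1, h2, heq⟩ := hEq n
  have key : qcone m ≫ G.f n = qcone m' ≫ G'.f n := by
    rw [← cancel_epi finf]
    have := congrArg (fun g => pcone lam₀ ≫ g) heq
    simp only [← Category.assoc, hp] at this
    rw [← Category.assoc, ← Category.assoc, hfinf, hfinf]
    simpa using this
  -- pick m₀ ≥ m, m'
  obtain ⟨m₀, hmm₀, hm'm₀⟩ := directed_of (· ≤ ·) m m'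
  -- Step 2: pcone (F.φ m₀) ≫ F.f m₀ ≫ Y.p _ = finf ≫ qcone _
  have step : ∀ (m₁ : M) (h : m₁ ≤ m₀),
      pcone (F.φ m₀) ≫ F.f m₀ ≫ Y.p h = finf ≫ qcone m₁ := by
    intro m₁ h
    obtain ⟨lam', hA, hB, hcm⟩ := F.comm h
    calc pcone (F.φ m₀) ≫ F.f m₀ ≫ Y.p h
        = pcone lam' ≫ X.p hB ≫ F.f m₀ ≫ Y.p h := by
          rw [← hp hB]; simp
      _ = pcone lam' ≫ X.p hA ≫ F.f m₁ := by rw [← hcm]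
      _ = pcone (F.φ m₁) ≫ F.f m₁ := by rw [← hp hA]; simp
      _ = finf ≫ qcone m₁ := (hfinf m₁).symm
  refine ⟨m₀, hmm₀, hm'm₀, ?_⟩
  have := hcomp m₀
  rw [← cancel_epi (pcone (F.φ m₀) ≫ F.f m₀)]
  calc (pcone (F.φ m₀) ≫ F.f m₀) ≫ Y.p hmm₀ ≫ G.f n
      = (pcone (F.φ m₀) ≫ F.f m₀ ≫ Y.p hmm₀) ≫ G.f n := by simp
    _ = (finf ≫ qcone m) ≫ G.f n := by rw [step m hmm₀]
    _ = finf ≫ qcone m ≫ G.f n := by simp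
    _ = finf ≫ qcone m' ≫ G'.f n := by rw [key]
    _ = (finf ≫ qcone m') ≫ G'.f n := by simp
    _ = (pcone (F.φ m₀) ≫ F.f m₀ ≫ Y.p hm'm₀) ≫ G'.f n := by rw [step m' hm'm₀]
    _ = (pcone (F.φ m₀) ≫ F.f m₀) ≫ Y.p hm'm₀ ≫ G'.f n := by simp
end
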